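/- If the Markov kernel T is α-contractive in total variation (i.e., ‖T F − T G‖_{TV} ≤ α‖F − G‖_{TV} for all densities F, G) with 0 < α < 1, then for every t ≥ 1, the t-step reduction error Δ_t = ‖P T^t F₀ − P (T R P)^t F₀‖_{TV} satisfies Δ_t ≤ δ_P/(1−α), where δ_P = sup_{i∈ℕ} ‖(TRP)^i F₀ − RP(TRP)^i F₀‖_{TV}. -/
import Mathlib


/-- If the Markov operator `T` is an `α`-contraction in total variation (modeled as
the distance on a pseudometric space of densities), with `P`, `R` TV-nonexpansive and
`P ∘ R = id`, then the `t`-step reduction error is bounded by `δ_P / (1 - α)`, where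
`δ_P = ⨆ i, dist ((T∘R∘P)^i F₀) (R (P ((T∘R∘P)^i F₀)))`. -/
theorem reduction_error_uniform_bound
    {D W : Type*} [PseudoMetricSpace D] [PseudoMetricSpace W]
    (P : D → W) (R : W → D) (T : D → D) (α : ℝ) (hα0 : 0 < α) (hα1 : α < 1)
    (hP : ∀ F G, dist (P F) (P G) ≤ dist F G)
    (hR : ∀ u v, dist (R u) (R v) ≤ dist u v)
    (hPR : ∀ w, P (R w) = w)
    (hT : ∀ F G, dist (T F) (T G) ≤ α * dist F G)
    (F₀ : D)
    (hbdd : BddAbove (Set.range fun i : ℕ =>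
      dist ((T ∘ R ∘ P)^[i] F₀) (R (P ((T ∘ R ∘ P)^[i] F₀))))) :
    ∀ t : ℕ, 1 ≤ t →
      dist (P (T^[t] F₀)) (P ((T ∘ R ∘ P)^[t] F₀))
        ≤ (⨆ i : ℕ, dist ((T ∘ R ∘ P)^[i] F₀) (R (P ((T ∘ R ∘ P)^[i] F₀)))) / (1 - α) := by
  set S := T ∘ R ∘ P with hS
  set δ := ⨆ i : ℕ, dist (S^[i] F₀) (R (P (S^[i] F₀))) with hδ
  have h1α : (0:ℝ) < 1 - α := by linarith
  have hd : ∀ i, dist (S^[i] F₀) (R (P (S^[i] F₀))) ≤ δ := fun i => le_ciSup hbdd i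
  have hδ0 : 0 ≤ δ := le_trans dist_nonneg (hd 0)
  have key : ∀ t, dist (T^[t] F₀) (S^[t] F₀) ≤ δ / (1 - α) := by
    intro t
    induction t with
    | zero => simpa using div_nonneg hδ0 (le_of_lt h1α)
    | succ n ih =>
      have h1 : T^[n+1] F₀ = T (T^[n] F₀) := Function.iterate_succ_apply' T n F₀
      have h2 : S^[n+1] F₀ = T (R (P (S^[n] F₀))) := by
        rw [Function.iterate_succ_apply' S n F₀]; rfl
      rw [h1, h2]
      calc dist (T (T^[n] F₀)) (T (R (P (S^[n] F₀))))
          ≤ α * dist (T^[n] F₀) (R (P (S^[n] F₀))) := hT _ _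
        _ ≤ α * (dist (T^[n] F₀) (S^[n] F₀) + dist (S^[n] F₀) (R (P (S^[n] F₀)))) := by
            have := dist_triangle (T^[n] F₀) (S^[n] F₀) (R (P (S^[n] F₀)))
            nlinarith
        _ ≤ α * (δ / (1 - α) + δ) := by nlinarith [hd n, dist_nonneg (x := T^[n] F₀) (y := S^[n] F₀)]
        _ ≤ δ / (1 - α) := by
            have heq : α * (δ / (1 - α) + δ) = (α * (δ + δ * (1 - α))) / (1 - α) := by
              field_simp
            rw [heq, div_le_div_iff₀ h1α h1α]
            nlinarith [mul_nonneg hδ0 (sq_nonneg (1 - α))]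
  exact fun t _ => le_trans (hP _ _) (key t)
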